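/- arXiv:1908.03887 — 3 statements merged into one kernel-verified Lean document; each statement's English description precedes it below -/
import Mathlib

section
/- There is a left action of Γ^n by Lie algebra automorphisms on t_{1,n}^Γ, where the element α_i (the n-tuple with α in the i-th slot and 0 elsewhere) fixes all x_j and y_j, fixes t^β_{kl} whenever i ∉ {k,l}, and sends t^β_{ij} to t^{β+α}_{ij} (and t^β_{ji} to t^{β-α}_{ji}) for j ≠ i. -/
/-! STATEMENT 0: In the Lie algebra `t_{1,n}^Γ` of infinitesimal ellipsitomic braids
(presented by generators `x_i, y_i, t^α_{ij}` and the relations listed in the paper),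
the elements `Σ_i x_i` and `Σ_i y_i` are central. -/

namespace Ellipsitomic3

/-- Generators of `t_{1,n}^Γ`. -/
inductive Gen (Γ : Type) (n : ℕ) : Type where
  | x : Fin n → Gen Γ n
  | y : Fin n → Gen Γ n
  | t : Γ → (i j : Fin n) → i ≠ j → Gen Γ n

variable (k : Type) [Field k] [CharZero k] (Γ : Type) [AddCommGroup Γ] [Fintype Γ] (n : ℕ)

/-- The generator `x_i` in the free Lie algebra. -/
noncomputable def X (i : Fin n) : FreeLieAlgebra k (Gen Γ n) := FreeLieAlgebra.of k (Gen.x i)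

/-- The generator `y_i` in the free Lie algebra. -/
noncomputable def Y (i : Fin n) : FreeLieAlgebra k (Gen Γ n) := FreeLieAlgebra.of k (Gen.y i)

/-- The generator `t^α_{ij}` (for `i ≠ j`) in the free Lie algebra. -/
noncomputable def T (α : Γ) (i j : Fin n) (h : i ≠ j) : FreeLieAlgebra k (Gen Γ n) :=
  FreeLieAlgebra.of k (Gen.t α i j h)

/-- The defining relations of `t_{1,n}^Γ`. -/
def Rels : Set (FreeLieAlgebra k (Gen Γ n)) :=
  -- (tS_ell 1):  t^α_{ij} = t^{-α}_{ji}
  {r | ∃ (α : Γ) (i j : Fin n) (h : i ≠ j),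
      r = T k Γ n α i j h - T k Γ n (-α) j i h.symm} ∪
  -- (tS_ell 2):  [x_i, y_j] = Σ_α t^α_{ij}  (i ≠ j), (and hence also [x_j,y_i])
  {r | ∃ (i j : Fin n) (h : i ≠ j),
      r = ⁅X k Γ n i, Y k Γ n j⁆ - ∑ α : Γ, T k Γ n α i j h} ∪
  {r | ∃ (i j : Fin n) (h : i ≠ j),
      r = ⁅X k Γ n j, Y k Γ n i⁆ - ∑ α : Γ, T k Γ n α i j h} ∪
  -- (tN_ell):  [x_i, x_j] = [y_i, y_j] = 0
  {r | ∃ i j : Fin n, r = ⁅X k Γ n i, X k Γ n j⁆} ∪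
  {r | ∃ i j : Fin n, r = ⁅Y k Γ n i, Y k Γ n j⁆} ∪
  -- (tT_ell):  [x_i, y_i] = -Σ_{j ≠ i} Σ_α t^α_{ij}
  {r | ∃ i : Fin n, r = ⁅X k Γ n i, Y k Γ n i⁆ +
      ∑ j ∈ Finset.univ.erase i, ∑ α : Γ,
        if h : i = j then 0 else T k Γ n α i j h} ∪
  -- (tL_ell 1):  [t^α_{ij}, t^β_{kl}] = 0  when #{i,j,k,l} = 4
  {r | ∃ (α β : Γ) (i j K l : Fin n) (hij : i ≠ j) (hKl : K ≠ l),
      i ≠ K ∧ i ≠ l ∧ j ≠ K ∧ j ≠ l ∧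
      r = ⁅T k Γ n α i j hij, T k Γ n β K l hKl⁆} ∪
  -- (tL_ell 2):  [x_i, t^α_{jK}] = [y_i, t^α_{jK}] = 0  when #{i,j,K} = 3
  {r | ∃ (α : Γ) (i j K : Fin n) (hjK : j ≠ K),
      i ≠ j ∧ i ≠ K ∧
      (r = ⁅X k Γ n i, T k Γ n α j K hjK⁆ ∨ r = ⁅Y k Γ n i, T k Γ n α j K hjK⁆)} ∪
  -- (t4T_ell 1):  [t^α_{ij}, t^{α+β}_{iK} + t^β_{jK}] = 0  when #{i,j,K} = 3
  {r | ∃ (α β : Γ) (i j K : Fin n) (hij : i ≠ j) (hiK : i ≠ K) (hjK : j ≠ K),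
      r = ⁅T k Γ n α i j hij, T k Γ n (α + β) i K hiK + T k Γ n β j K hjK⁆} ∪
  -- (t4T_ell 2):  [x_i + x_j, t^α_{ij}] = [y_i + y_j, t^α_{ij}] = 0
  {r | ∃ (α : Γ) (i j : Fin n) (h : i ≠ j),
      r = ⁅X k Γ n i + X k Γ n j, T k Γ n α i j h⁆ ∨
      r = ⁅Y k Γ n i + Y k Γ n j, T k Γ n α i j h⁆}

/-- The Lie ideal generated by the relations. -/
noncomputable def relIdeal : LieIdeal k (FreeLieAlgebra k (Gen Γ n)) :=
  LieSubmodule.lieSpan k (FreeLieAlgebra k (Gen Γ n)) (Rels k Γ n)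

/-- The Lie algebra `t_{1,n}^Γ` of infinitesimal ellipsitomic braids. -/
abbrev t1n := FreeLieAlgebra k (Gen Γ n) ⧸ relIdeal k Γ n

/-- The projection onto `t_{1,n}^Γ`. -/
noncomputable def mk : FreeLieAlgebra k (Gen Γ n) → t1n k Γ n :=
  LieSubmodule.Quotient.mk (N := relIdeal k Γ n)

end Ellipsitomic3

/-! Γⁿ acts on the generators by `g • t^β_{ij} = t^{β + g_i - g_j}_{ij}`, fixing every `x_i` and
`y_i`, hence on the free Lie algebra. It maps each family of defining relations into itself:
`Σ_α t^α_{ij}` is invariant because `α ↦ α + g_i - g_j` is a bijection of Γ, and the twisted 4T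
relation is preserved because `(α + β) + g_i - g_k = (α + g_i - g_j) + (β + g_j - g_k)`. So the
ideal of relations is stable and the action descends to `t_{1,n}^Γ`. -/

namespace LieIdeal

variable {R L L' L'' : Type*} [CommRing R] [LieRing L] [LieAlgebra R L] [LieRing L']
  [LieAlgebra R L'] [LieRing L''] [LieAlgebra R L'']

noncomputable def quotientMap (I : LieIdeal R L) (J : LieIdeal R L') (f : L →ₗ⁅R⁆ L')
    (hf : I ≤ J.comap f) : L ⧸ I →ₗ⁅R⁆ L' ⧸ J :=
  { Submodule.mapQ I.toSubmodule J.toSubmodule f.toLinearMap fun _ hx => mem_comap.mp (hf hx) with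
    map_lie' := by
      rintro ⟨x⟩ ⟨y⟩
      exact congrArg LieSubmodule.Quotient.mk (f.map_lie x y) }

@[simp]
theorem quotientMap_mk (I : LieIdeal R L) (J : LieIdeal R L') (f : L →ₗ⁅R⁆ L')
    (hf : I ≤ J.comap f) (x : L) :
    I.quotientMap J f hf (LieSubmodule.Quotient.mk x) = LieSubmodule.Quotient.mk (f x) :=
  rfl

theorem quotientMap_id (I : LieIdeal R L) (hf : I ≤ I.comap LieHom.id) :
    I.quotientMap I LieHom.id hf = LieHom.id := by
  ext ⟨x⟩
  rfl

theorem quotientMap_comp (I : LieIdeal R L) (J : LieIdeal R L') (K : LieIdeal R L'')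
    (f : L' →ₗ⁅R⁆ L'') (g : L →ₗ⁅R⁆ L') (hf : J ≤ K.comap f) (hg : I ≤ J.comap g)
    (hfg : I ≤ K.comap (f.comp g)) :
    I.quotientMap K (f.comp g) hfg = (J.quotientMap K f hf).comp (I.quotientMap J g hg) := by
  ext ⟨x⟩
  rfl

end LieIdeal

namespace Ellipsitomic3

section Twist

variable {Γ : Type} [AddCommGroup Γ] {n : ℕ}

instance : AddAction (Fin n → Γ) (Gen Γ n) where
  vadd g
    | .x i => .x i
    | .y i => .y i
    | .t β i j h => .t (β + g i - g j) i j h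
  zero_vadd := by rintro (_ | _ | _) <;> simp [HVAdd.hVAdd]
  add_vadd g g' := by
    rintro (_ | _ | ⟨β, i, j, h⟩) <;> simp only [HVAdd.hVAdd, VAdd.vadd]
    congr 1
    simp only [Pi.add_apply]
    abel

variable (k : Type) [Field k]

noncomputable def twist (g : Fin n → Γ) :
    FreeLieAlgebra k (Gen Γ n) →ₗ⁅k⁆ FreeLieAlgebra k (Gen Γ n) :=
  FreeLieAlgebra.lift k fun a => FreeLieAlgebra.of k (g +ᵥ a)

theorem twist_of (g : Fin n → Γ) (a : Gen Γ n) :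
    twist k g (FreeLieAlgebra.of k a) = FreeLieAlgebra.of k (g +ᵥ a) :=
  FreeLieAlgebra.lift_of_apply _ _

theorem twist_zero : twist k (0 : Fin n → Γ) = LieHom.id :=
  FreeLieAlgebra.hom_ext fun a => by rw [twist_of, zero_vadd, LieHom.id_apply]

theorem twist_add (g g' : Fin n → Γ) : twist k (g + g') = (twist k g).comp (twist k g') :=
  FreeLieAlgebra.hom_ext fun a => by
    rw [LieHom.comp_apply, twist_of, twist_of, twist_of, add_vadd]

@[simp] theorem twist_X (g : Fin n → Γ) (i : Fin n) : twist k g (X k Γ n i) = X k Γ n i :=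
  twist_of k g _

@[simp] theorem twist_Y (g : Fin n → Γ) (i : Fin n) : twist k g (Y k Γ n i) = Y k Γ n i :=
  twist_of k g _

@[simp] theorem twist_T (g : Fin n → Γ) (β : Γ) (i j : Fin n) (h : i ≠ j) :
    twist k g (T k Γ n β i j h) = T k Γ n (β + g i - g j) i j h :=
  twist_of k g _

variable [Fintype Γ]

theorem twist_sum_T (g : Fin n → Γ) (i j : Fin n) (h : i ≠ j) :
    twist k g (∑ α : Γ, T k Γ n α i j h) = ∑ α : Γ, T k Γ n α i j h := by
  rw [map_sum]
  simp only [twist_T, add_sub_assoc]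
  exact Fintype.sum_equiv (Equiv.addRight (g i - g j)) _ _ fun _ => rfl

theorem twist_mapsTo_rels (g : Fin n → Γ) :
    Set.MapsTo (twist k g) (Rels k Γ n) (Rels k Γ n) := by
  unfold Rels
  apply_rules [Set.MapsTo.union_union]
  · rintro _ ⟨α, i, j, h, rfl⟩
    refine ⟨α + g i - g j, i, j, h, ?_⟩
    rw [map_sub, twist_T, twist_T, show -α + g j - g i = -(α + g i - g j) by abel]
  · rintro _ ⟨i, j, h, rfl⟩
    exact ⟨i, j, h, by rw [map_sub, LieHom.map_lie, twist_X, twist_Y, twist_sum_T]⟩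
  · rintro _ ⟨i, j, h, rfl⟩
    exact ⟨i, j, h, by rw [map_sub, LieHom.map_lie, twist_X, twist_Y, twist_sum_T]⟩
  · rintro _ ⟨i, j, rfl⟩
    exact ⟨i, j, by rw [LieHom.map_lie, twist_X, twist_X]⟩
  · rintro _ ⟨i, j, rfl⟩
    exact ⟨i, j, by rw [LieHom.map_lie, twist_Y, twist_Y]⟩
  · rintro _ ⟨i, rfl⟩
    refine ⟨i, ?_⟩
    rw [map_add, LieHom.map_lie, twist_X, twist_Y, map_sum]
    refine congrArg _ (Finset.sum_congr rfl fun j hj => ?_)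
    have hij : i ≠ j := (Finset.ne_of_mem_erase hj).symm
    simp only [dif_neg hij]
    exact twist_sum_T k g i j hij
  · rintro _ ⟨α, β, i, j, K, l, hij, hKl, hiK, hil, hjK, hjl, rfl⟩
    refine ⟨α + g i - g j, β + g K - g l, i, j, K, l, hij, hKl, hiK, hil, hjK, hjl, ?_⟩
    rw [LieHom.map_lie, twist_T, twist_T]
  · rintro _ ⟨α, i, j, K, hjK, hij, hiK, rfl | rfl⟩
    · exact ⟨α + g j - g K, i, j, K, hjK, hij, hiK,
        .inl (by rw [LieHom.map_lie, twist_X, twist_T])⟩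
    · exact ⟨α + g j - g K, i, j, K, hjK, hij, hiK,
        .inr (by rw [LieHom.map_lie, twist_Y, twist_T])⟩
  · rintro _ ⟨α, β, i, j, K, hij, hiK, hjK, rfl⟩
    refine ⟨α + g i - g j, β + g j - g K, i, j, K, hij, hiK, hjK, ?_⟩
    rw [LieHom.map_lie, map_add, twist_T, twist_T, twist_T,
      show α + β + g i - g K = α + g i - g j + (β + g j - g K) by abel]
  · rintro _ ⟨α, i, j, h, rfl | rfl⟩
    · exact ⟨α + g i - g j, i, j, h,
        .inl (by rw [LieHom.map_lie, map_add, twist_X, twist_X, twist_T])⟩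
    · exact ⟨α + g i - g j, i, j, h,
        .inr (by rw [LieHom.map_lie, map_add, twist_Y, twist_Y, twist_T])⟩

theorem relIdeal_le_comap_twist (g : Fin n → Γ) :
    relIdeal k Γ n ≤ (relIdeal k Γ n).comap (twist k g) :=
  LieSubmodule.lieSpan_le.mpr fun _ hr =>
    LieIdeal.mem_comap.mpr (LieSubmodule.subset_lieSpan (twist_mapsTo_rels k g hr))

end Twist

variable (k : Type) [Field k] [CharZero k] (Γ : Type) [AddCommGroup Γ] [Fintype Γ] (n : ℕ)

/-- There is a left action of `Γ^n` by Lie algebra automorphisms on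
`t_{1,n}^Γ`, where `g = (g_1,…,g_n) ∈ Γ^n` fixes all `x_i` and `y_i` and sends
`t^β_{kl}` to `t^{β + g_k - g_l}_{kl}`; in particular `α_i` (with `α` in the `i`-th
slot and `0` elsewhere) fixes `t^β_{kl}` whenever `i ∉ {k,l}`, sends `t^β_{ij}` to
`t^{β+α}_{ij}` and `t^β_{ji}` to `t^{β-α}_{ji}`.  The action property
`act (g+g') = act g ∘ act g'` and `act 0 = id` makes each `act g` an automorphism. -/
theorem gamma_n_action_by_automorphisms :
    ∃ act : (Fin n → Γ) → (t1n k Γ n →ₗ⁅k⁆ t1n k Γ n),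
      act 0 = LieHom.id ∧
      (∀ g g' : Fin n → Γ, act (g + g') = (act g).comp (act g')) ∧
      (∀ (g : Fin n → Γ) (i : Fin n), act g (mk k Γ n (X k Γ n i)) = mk k Γ n (X k Γ n i)) ∧
      (∀ (g : Fin n → Γ) (i : Fin n), act g (mk k Γ n (Y k Γ n i)) = mk k Γ n (Y k Γ n i)) ∧
      (∀ (g : Fin n → Γ) (β : Γ) (i j : Fin n) (h : i ≠ j),
        act g (mk k Γ n (T k Γ n β i j h)) =
          mk k Γ n (T k Γ n (β + g i - g j) i j h)) := by
  let I := relIdeal k Γ n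
  refine ⟨fun g => I.quotientMap I (twist k g) (relIdeal_le_comap_twist k g), ?_, fun g g' => ?_,
    fun g i => ?_, fun g i => ?_, fun g β i j h => ?_⟩
  · simp only [twist_zero]
    exact I.quotientMap_id _
  · simp only [twist_add]
    exact I.quotientMap_comp I I _ _ (relIdeal_le_comap_twist k g) (relIdeal_le_comap_twist k g') _
  all_goals simp only [mk, LieIdeal.quotientMap_mk, twist_X, twist_Y, twist_T]

end Ellipsitomic3
end

section
/- In the free Lie algebra on generators x, t₁, t₂ over a field of characteristic zero, for every s ≥ 1 one has [t₁, (ad x)^s t₂] + [t₂, (-ad x)^s t₁] = Σ_{p+q=s-1} [x, [(-ad x)^q t₁, (ad x)^p t₂]]. -/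
/-- In the free Lie algebra on generators `x, t₁, t₂` over a field of
characteristic zero, for every `s ≥ 1` one has
`[t₁, (ad x)^s t₂] + [t₂, (-ad x)^s t₁] = Σ_{p+q=s-1} [x, [(-ad x)^q t₁, (ad x)^p t₂]]`. -/
theorem free_lie_ad_sum_identity (k : Type*) [Field k] [CharZero k] (s : ℕ) (hs : 1 ≤ s)
    (x t₁ t₂ : FreeLieAlgebra k (Fin 3))
    (hx : x = FreeLieAlgebra.of k 0) (ht₁ : t₁ = FreeLieAlgebra.of k 1)
    (ht₂ : t₂ = FreeLieAlgebra.of k 2) :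
    ⁅t₁, (LieAlgebra.ad k (FreeLieAlgebra k (Fin 3)) x ^ s) t₂⁆ +
      ⁅t₂, ((-LieAlgebra.ad k (FreeLieAlgebra k (Fin 3)) x) ^ s) t₁⁆ =
    ∑ p ∈ Finset.range s,
      ⁅x, ⁅((-LieAlgebra.ad k (FreeLieAlgebra k (Fin 3)) x) ^ (s - 1 - p)) t₁,
           (LieAlgebra.ad k (FreeLieAlgebra k (Fin 3)) x ^ p) t₂⁆⁆ := by
  set A := LieAlgebra.ad k (FreeLieAlgebra k (Fin 3)) x with hA
  have key : ∀ p ∈ Finset.range s,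
      ⁅x, ⁅((-A) ^ (s - 1 - p)) t₁, (A ^ p) t₂⁆⁆
        = (fun p => ⁅((-A) ^ (s - p)) t₁, (A ^ p) t₂⁆) (p + 1)
          - (fun p => ⁅((-A) ^ (s - p)) t₁, (A ^ p) t₂⁆) p := by
    intro p hp
    rw [Finset.mem_range] at hp
    have h1 : s - (p + 1) = s - 1 - p := by omega
    have h2 : s - p = (s - 1 - p) + 1 := by omega
    simp only [h1, h2]
    rw [leibniz_lie, pow_succ' (-A) (s - 1 - p), pow_succ' A p]
    simp only [Module.End.mul_apply, LinearMap.neg_apply, hA, LieAlgebra.ad_apply, neg_lie]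
    abel
  rw [Finset.sum_congr rfl key,
    Finset.sum_range_sub (fun p : ℕ => ⁅((-A) ^ (s - p)) t₁, (A ^ p) t₂⁆)]
  simp only [Nat.sub_self, Nat.sub_zero, pow_zero, Module.End.one_apply]
  rw [← lie_skew (((-A) ^ s) t₁) t₂]
  abel
end

section
/- For α, β ∈ Γ and nonzero u, v, u+v, the theta-type functions k_α satisfy the three-term Fay-type identity: (k_α(-v,z) - 1/v)(k_β(u+v,z') + 1/(u+v)) - (k_α(u,z) + 1/u)(k_{β-α}(u+v,z'-z) + 1/(u+v)) + (k_β(u,z') + 1/u)(k_{β-α}(v,z'-z) + 1/v) = 0, as meromorphic functions of (u,v,z,z'). -/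
/-!
Write `A = z - α̃`, `B = z' - β̃`. Since `k_α(x, z) + 1/x = e^{-2πiax} θ(A + x) / (θ(A) θ(x))`, the
exponential factors of the three products coincide, and clearing denominators reduces the claim
to the untwisted three-term identity `G(A) = 0` for the theta combination `fayCombination`.

For fixed `u, v, B`, both `G` and `D(A) = θ(A) θ(B + v - A)` pick up the same factor under
`A ↦ A + 1` and `A ↦ A + τ`. The function `G` vanishes at the zeros of `D`, and these zeros are
simple as long as `θ(B + v) ≠ 0`; so `G / D` is an entire elliptic function, hence constant, and
it vanishes at `A = -u`. The remaining `B` follow by continuity, since only countably many `B`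
are excluded.
-/

open Complex Set Filter Function

theorem Function.Periodic.int_add_int_mul {R α : Type*} [Ring R] {f : R → α} {τ : R}
    (h1 : Periodic f 1) (hτ : Periodic f τ) (m n : ℤ) : Periodic f (m + n * τ) := by
  simpa using (h1.int_mul m).add_period (hτ.int_mul n)

theorem exists_ofReal_add_ofReal_mul_eq {τ : ℂ} (hτ : τ.im ≠ 0) (z : ℂ) :
    ∃ s t : ℝ, (s : ℂ) + t * τ = z :=
  ⟨z.re - z.im / τ.im * τ.re, z.im / τ.im, Complex.ext (by simp) (by simp [hτ])⟩

theorem Differentiable.apply_eq_apply_of_periodic {f : ℂ → ℂ} {τ : ℂ} (hτ : τ.im ≠ 0)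
    (hf : Differentiable ℂ f) (h1 : Periodic f 1) (hτf : Periodic f τ) (a b : ℂ) :
    f a = f b := by
  refine hf.apply_eq_apply_of_bounded ?_ a b
  have hK : IsCompact ((fun p : ℝ × ℝ => (p.1 : ℂ) + p.2 * τ) '' Icc 0 1 ×ˢ Icc 0 1) :=
    (isCompact_Icc.prod isCompact_Icc).image (by fun_prop)
  refine (hK.image hf.continuous).isBounded.subset ?_
  rintro _ ⟨z, rfl⟩
  obtain ⟨s, t, rfl⟩ := exists_ofReal_add_ofReal_mul_eq hτ z
  refine ⟨_, ⟨(Int.fract s, Int.fract t), ⟨⟨Int.fract_nonneg s, (Int.fract_lt_one s).le⟩,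
    Int.fract_nonneg t, (Int.fract_lt_one t).le⟩, rfl⟩, ?_⟩
  convert (h1.int_add_int_mul hτf ⌊s⌋ ⌊t⌋).sub_eq _ using 2
  simp only [Int.fract]
  push_cast
  ring

theorem exists_differentiable_eq_mul_of_simple_zeros {G D : ℂ → ℂ} (hG : Differentiable ℂ G)
    (hD : Differentiable ℂ D) (hGD : ∀ p, D p = 0 → G p = 0 ∧ deriv D p ≠ 0) :
    ∃ T : ℂ → ℂ, Differentiable ℂ T ∧ ∀ w, G w = T w * D w := by
  classical
  set T : ℂ → ℂ := fun w => if D w = 0 then deriv G w / deriv D w else G w / D w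
  refine ⟨T, fun p => ?_, fun w => ?_⟩
  · by_cases hp : D p = 0
    · have hdslope : ∀ F : ℂ → ℂ, Differentiable ℂ F → Differentiable ℂ (dslope F p) :=
        fun F hF => differentiableOn_univ.mp <|
          (differentiableOn_dslope univ_mem).mpr hF.differentiableOn
      have hDp : dslope D p p ≠ 0 := by rw [dslope_same]; exact (hGD p hp).2
      refine (((hdslope G hG) p).div ((hdslope D hD) p) hDp).congr_of_eventuallyEq ?_
      filter_upwards [(hdslope D hD).continuous.continuousAt.eventually_ne hDp] with w hw
      rcases eq_or_ne w p with rfl | hwp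
      · simp [T, hp, dslope_same]
      · have hG' := sub_smul_dslope G p w
        have hD' := sub_smul_dslope D p w
        rw [(hGD p hp).1, sub_zero, smul_eq_mul] at hG'
        rw [hp, sub_zero, smul_eq_mul] at hD'
        have hDw : D w ≠ 0 := hD' ▸ mul_ne_zero (sub_ne_zero.mpr hwp) hw
        simp only [T, if_neg hDw, ← hG', ← hD']
        exact mul_div_mul_left _ _ (sub_ne_zero.mpr hwp)
    · refine ((hG p).div (hD p) hp).congr_of_eventuallyEq ?_
      filter_upwards [hD.continuous.continuousAt.eventually_ne hp] with w hw
      simp [T, hw]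
  · by_cases hw : D w = 0
    · simp [hw, (hGD w hw).1]
    · simp [T, hw]

theorem Function.Periodic.of_eq_mul {X K : Type*} [TopologicalSpace X] [Add X] [ContinuousAdd X]
    [Field K] [TopologicalSpace K] [T2Space K] {G D T c : X → K} {ω : X}
    (hT : Continuous T) (hD : Dense {w | D w ≠ 0}) (hc : ∀ w, c w ≠ 0)
    (hGω : ∀ w, G (w + ω) = c w * G w) (hDω : ∀ w, D (w + ω) = c w * D w)
    (hGT : ∀ w, G w = T w * D w) : Periodic T ω := by
  refine congrFun (hT.comp (continuous_add_const ω) |>.ext_on hD hT fun w hw => ?_)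
  have h := hGT (w + ω)
  rw [hGω, hDω, hGT w] at h
  exact mul_right_cancel₀ (mul_ne_zero (hc w) hw) (by simp only [comp_apply]; linear_combination -h)

noncomputable def thetaMultiplier (τ z : ℂ) : ℂ :=
  -exp (-(↑Real.pi * I * τ)) * exp (-(2 * ↑Real.pi * I * z))

theorem thetaMultiplier_ne_zero (τ z : ℂ) : thetaMultiplier τ z ≠ 0 := by
  simp [thetaMultiplier, exp_ne_zero]

/-- The factor picked up by `A ↦ θ (A + x) * θ (y - A)` under `A ↦ A + τ` is
`thetaPairFactor τ (y - x - 2 * A)`. -/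
noncomputable def thetaPairFactor (τ s : ℂ) : ℂ :=
  exp (2 * ↑Real.pi * I * (s - τ))

section Theta

variable {θ : ℂ → ℂ} {τ : ℂ}

theorem theta_zero_of_odd (hodd : ∀ z, θ (-z) = -θ z) : θ 0 = 0 := by
  have h := hodd 0
  rw [neg_zero] at h
  exact self_eq_neg.mp h

theorem theta_add_eq_zero (hzero : ∀ z, θ z = 0 ↔ ∃ m n : ℤ, z = m + n * τ) {a b : ℂ}
    (ha : θ a = 0) (hb : θ b = 0) : θ (a + b) = 0 := by
  obtain ⟨m, n, rfl⟩ := (hzero a).1 ha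
  obtain ⟨m', n', rfl⟩ := (hzero b).1 hb
  exact (hzero _).2 ⟨m + m', n + n', by push_cast; ring⟩

theorem dense_setOf_theta_mul_theta_ne_zero (hzero : ∀ z, θ z = 0 → ∃ m n : ℤ, z = m + n * τ)
    {f g : ℂ → ℂ} (hf : Injective f) (hg : Injective g) :
    Dense {z | θ (f z) * θ (g z) ≠ 0} := by
  have hZ : {z | θ z = 0}.Countable :=
    (countable_range fun p : ℤ × ℤ => (p.1 + p.2 * τ : ℂ)).mono fun z hz => by
      obtain ⟨m, n, rfl⟩ := hzero z hz
      exact ⟨(m, n), rfl⟩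
  convert ((hZ.preimage hf).union (hZ.preimage hg)).dense_compl ℂ using 1
  ext z
  simp [not_or]

theorem deriv_theta_add_one (h1 : ∀ z, θ (z + 1) = -θ z) (z : ℂ) :
    deriv θ (z + 1) = -deriv θ z := by
  rw [← deriv_comp_add_const, funext h1, deriv.fun_neg]

theorem deriv_theta_add_tau (hol : Differentiable ℂ θ)
    (hτper : ∀ z, θ (z + τ) = thetaMultiplier τ z * θ z) {z : ℂ} (hz : θ z = 0) :
    deriv θ (z + τ) = thetaMultiplier τ z * deriv θ z := by
  have hmul : DifferentiableAt ℂ (thetaMultiplier τ) z := by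
    unfold thetaMultiplier; fun_prop
  rw [← deriv_comp_add_const, funext hτper, deriv_fun_mul hmul (hol z), hz, mul_zero, zero_add]

theorem deriv_theta_ne_zero (hol : Differentiable ℂ θ)
    (hzero : ∀ z, θ z = 0 ↔ ∃ m n : ℤ, z = m + n * τ) (h1 : ∀ z, θ (z + 1) = -θ z)
    (hτper : ∀ z, θ (z + τ) = thetaMultiplier τ z * θ z) (hder : deriv θ 0 = 1) {z : ℂ}
    (hz : θ z = 0) : deriv θ z ≠ 0 := by
  set P : ℂ → Prop := fun z => θ z = 0 ∧ deriv θ z ≠ 0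
  have hP1 : Periodic P 1 := fun z => by
    simp only [P, h1, deriv_theta_add_one h1, neg_eq_zero, ne_eq]
  have hPτ : Periodic P τ := fun z => by
    simp only [P, hτper, mul_eq_zero, thetaMultiplier_ne_zero, false_or]
    exact propext <| and_congr_right fun hz => by
      rw [deriv_theta_add_tau hol hτper hz, mul_ne_zero_iff]
      simp [thetaMultiplier_ne_zero]
  obtain ⟨m, n, rfl⟩ := (hzero z).1 hz
  have hP0 : P 0 := ⟨(hzero 0).2 ⟨0, 0, by simp⟩, by simp [hder]⟩
  have h := hP1.int_add_int_mul hPτ m n 0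
  rw [zero_add] at h
  exact (show P _ from h ▸ hP0).2

theorem deriv_theta_mul_theta_sub_ne_zero (hol : Differentiable ℂ θ)
    (hzero : ∀ z, θ z = 0 ↔ ∃ m n : ℤ, z = m + n * τ) (h1 : ∀ z, θ (z + 1) = -θ z)
    (hτper : ∀ z, θ (z + τ) = thetaMultiplier τ z * θ z) (hder : deriv θ 0 = 1) {s p : ℂ}
    (hs : θ s ≠ 0) (hp : θ p * θ (s - p) = 0) :
    deriv (fun w => θ w * θ (s - w)) p ≠ 0 := by
  have hderiv : HasDerivAt (fun w => θ w * θ (s - w))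
      (deriv θ p * θ (s - p) + θ p * (deriv θ (s - p) * -1)) p :=
    (hol p).hasDerivAt.mul ((hol (s - p)).hasDerivAt.comp p ((hasDerivAt_id p).const_sub s))
  have hsimple := fun {z} => deriv_theta_ne_zero (z := z) hol hzero h1 hτper hder
  rw [hderiv.deriv]
  rcases mul_eq_zero.mp hp with hp | hsp
  · have hsp : θ (s - p) ≠ 0 := fun hsp => hs <| by
      simpa using theta_add_eq_zero hzero hp hsp
    simpa [hp] using And.intro (hsimple hp) hsp
  · have hp : θ p ≠ 0 := fun hp => hs <| by
      simpa using theta_add_eq_zero hzero hp hsp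
    simpa [hsp] using And.intro hp (hsimple hsp)

theorem theta_add_one_mul_theta_sub_one (h1 : ∀ z, θ (z + 1) = -θ z) (a b : ℂ) :
    θ (a + 1) * θ (b - 1) = θ a * θ b := by
  have hb := h1 (b - 1)
  rw [sub_add_cancel] at hb
  rw [h1, hb]
  ring

theorem theta_add_tau_mul_theta_sub_tau (hτper : ∀ z, θ (z + τ) = thetaMultiplier τ z * θ z)
    (a b : ℂ) : θ (a + τ) * θ (b - τ) = thetaPairFactor τ (b - a) * (θ a * θ b) := by
  have hb := hτper (b - τ)
  rw [sub_add_cancel] at hb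
  have hexp : thetaMultiplier τ a = thetaPairFactor τ (b - a) * thetaMultiplier τ (b - τ) := by
    simp only [thetaMultiplier, thetaPairFactor, mul_neg, neg_mul, ← exp_add]
    congr 2
    ring
  rw [hτper, hb, hexp]
  field_simp [thetaMultiplier_ne_zero]

theorem theta_mul_theta_sub_add_one (h1 : ∀ z, θ (z + 1) = -θ z) (s A : ℂ) :
    θ (A + 1) * θ (s - (A + 1)) = θ A * θ (s - A) := by
  convert theta_add_one_mul_theta_sub_one h1 A (s - A) using 3
  ring

theorem theta_mul_theta_sub_add_tau (hτper : ∀ z, θ (z + τ) = thetaMultiplier τ z * θ z)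
    (s A : ℂ) :
    θ (A + τ) * θ (s - (A + τ)) = thetaPairFactor τ (s - 2 * A) * (θ A * θ (s - A)) := by
  convert theta_add_tau_mul_theta_sub_tau hτper A (s - A) using 3 <;> ring

end Theta

/-- The three-term identity `k(-v, A) k(u+v, B) - k(u, A) k(u+v, B-A) + k(u, B) k(v, B-A) = 0`
for `k(x, z) = θ(z + x) / (θ(z) θ(x))`, with the denominators cleared. -/
noncomputable def fayCombination (θ : ℂ → ℂ) (u v B A : ℂ) : ℂ :=
  θ (A + u) * θ (B + u + v - A) * θ B * θ v + θ (A - v) * θ (B + u + v) * θ (B - A) * θ u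
    - θ (B + u) * θ (B + v - A) * θ A * θ (u + v)

section Fay

variable {θ : ℂ → ℂ} {τ : ℂ}

theorem fayCombination_add_period {ω : ℂ} {c : ℂ → ℂ}
    (hω : ∀ a b, θ (a + ω) * θ (b - ω) = c (b - a) * (θ a * θ b)) (u v B A : ℂ) :
    fayCombination θ u v B (A + ω) = c (B + v - 2 * A) * fayCombination θ u v B A := by
  have h₁ := hω (A + u) (B + u + v - A)
  have h₂ := hω (A - v) (B - A)
  have h₃ := hω A (B + v - A)
  unfold fayCombination
  -- `ring_nf` also normalizes the arguments of `θ` and `c`, matching them with those of `h₁, h₂, h₃`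
  linear_combination (norm := ring_nf)
    θ B * θ v * h₁ + θ (B + u + v) * θ u * h₂ - θ (B + u) * θ (u + v) * h₃

theorem fayCombination_add_one (h1 : ∀ z, θ (z + 1) = -θ z) (u v B A : ℂ) :
    fayCombination θ u v B (A + 1) = fayCombination θ u v B A := by
  simpa using fayCombination_add_period (c := fun _ => 1)
    (by simpa using theta_add_one_mul_theta_sub_one h1) u v B A

theorem fayCombination_add_tau (hτper : ∀ z, θ (z + τ) = thetaMultiplier τ z * θ z)
    (u v B A : ℂ) : fayCombination θ u v B (A + τ) =
      thetaPairFactor τ (B + v - 2 * A) * fayCombination θ u v B A :=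
  fayCombination_add_period (theta_add_tau_mul_theta_sub_tau hτper) u v B A

theorem fayCombination_apply_zero (hodd : ∀ z, θ (-z) = -θ z) (u v B : ℂ) :
    fayCombination θ u v B 0 = 0 := by
  simp only [fayCombination, zero_add, sub_zero, zero_sub, hodd, theta_zero_of_odd hodd]
  ring

theorem fayCombination_apply_neg (hodd : ∀ z, θ (-z) = -θ z) (u v B : ℂ) :
    fayCombination θ u v B (-u) = 0 := by
  rw [fayCombination, neg_add_cancel, theta_zero_of_odd hodd, show -u - v = -(u + v) by ring,
    hodd, hodd, sub_neg_eq_add, sub_neg_eq_add]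
  ring_nf

theorem fayCombination_apply_add (hodd : ∀ z, θ (-z) = -θ z) (u v B : ℂ) :
    fayCombination θ u v B (B + v) = 0 := by
  rw [fayCombination, show B + u + v - (B + v) = u by ring, show B + v - v = B by ring,
    show B - (B + v) = -v by ring, sub_self, theta_zero_of_odd hodd, hodd]
  ring_nf

theorem fayCombination_eq_zero_of_theta_mul_theta_sub_eq_zero
    (hzero : ∀ z, θ z = 0 → ∃ m n : ℤ, z = m + n * τ) (h1 : ∀ z, θ (z + 1) = -θ z)
    (hodd : ∀ z, θ (-z) = -θ z) (hτper : ∀ z, θ (z + τ) = thetaMultiplier τ z * θ z)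
    {u v B p : ℂ} (hp : θ p * θ (B + v - p) = 0) : fayCombination θ u v B p = 0 := by
  set P : ℂ → Prop := fun A => fayCombination θ u v B A = 0
  have hP1 : Periodic P 1 := fun A => by
    simp only [P, fayCombination_add_one h1]
  have hPτ : Periodic P τ := fun A => by
    simp only [P, fayCombination_add_tau hτper, mul_eq_zero, thetaPairFactor, exp_ne_zero,
      false_or]
  rcases mul_eq_zero.mp hp with hp | hp
  · obtain ⟨m, n, rfl⟩ := hzero p hp
    have h := hP1.int_add_int_mul hPτ m n 0
    rw [zero_add] at h
    exact (show P _ from h ▸ fayCombination_apply_zero hodd u v B)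
  · obtain ⟨m, n, hmn⟩ := hzero _ hp
    have h := (hP1.int_add_int_mul hPτ m n).sub_eq (B + v)
    rw [← hmn, sub_sub_cancel] at h
    exact (show P _ from h ▸ fayCombination_apply_add hodd u v B)

theorem fayCombination_eq_zero_of_theta_ne_zero (hτ : τ.im ≠ 0) (hol : Differentiable ℂ θ)
    (hzero : ∀ z, θ z = 0 ↔ ∃ m n : ℤ, z = m + n * τ) (h1 : ∀ z, θ (z + 1) = -θ z)
    (hodd : ∀ z, θ (-z) = -θ z) (hτper : ∀ z, θ (z + τ) = thetaMultiplier τ z * θ z)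
    (hder : deriv θ 0 = 1) {u v B : ℂ} (hu : θ u ≠ 0) (hBv : θ (B + v) ≠ 0)
    (hBuv : θ (B + u + v) ≠ 0) (A : ℂ) : fayCombination θ u v B A = 0 := by
  set D : ℂ → ℂ := fun w => θ w * θ (B + v - w)
  obtain ⟨T, hT, hGT⟩ := exists_differentiable_eq_mul_of_simple_zeros
    (G := fayCombination θ u v B) (D := D) (by unfold fayCombination; fun_prop) (by fun_prop)
    fun p hp => ⟨fayCombination_eq_zero_of_theta_mul_theta_sub_eq_zero (fun z => (hzero z).1)
      h1 hodd hτper hp, deriv_theta_mul_theta_sub_ne_zero hol hzero h1 hτper hder hBv hp⟩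
  have hD : Dense {w | D w ≠ 0} := dense_setOf_theta_mul_theta_ne_zero (fun z => (hzero z).1)
    injective_id (sub_right_injective (b := B + v))
  have hT1 : Periodic T 1 := Periodic.of_eq_mul (c := fun _ => 1) hT.continuous hD
    (fun _ => one_ne_zero) (fun w => by rw [one_mul, fayCombination_add_one h1])
    (fun w => by rw [one_mul]; exact theta_mul_theta_sub_add_one h1 (B + v) w) hGT
  have hTτ : Periodic T τ := Periodic.of_eq_mul hT.continuous hD
    (fun _ => exp_ne_zero _) (fayCombination_add_tau hτper u v B)
    (theta_mul_theta_sub_add_tau hτper (B + v)) hGT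
  have hDu : D (-u) ≠ 0 := by
    simpa [D, hodd, show B + v + u = B + u + v by ring] using And.intro hu hBuv
  have hTu : T (-u) = 0 := by
    have h := hGT (-u)
    rw [fayCombination_apply_neg hodd] at h
    exact (mul_eq_zero.mp h.symm).resolve_right hDu
  rw [hGT, hT.apply_eq_apply_of_periodic hτ hT1 hTτ A (-u), hTu, zero_mul]

theorem fayCombination_eq_zero (hτ : τ.im ≠ 0) (hol : Differentiable ℂ θ)
    (hzero : ∀ z, θ z = 0 ↔ ∃ m n : ℤ, z = m + n * τ) (h1 : ∀ z, θ (z + 1) = -θ z)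
    (hodd : ∀ z, θ (-z) = -θ z) (hτper : ∀ z, θ (z + τ) = thetaMultiplier τ z * θ z)
    (hder : deriv θ 0 = 1) {u : ℂ} (hu : θ u ≠ 0) (v B A : ℂ) :
    fayCombination θ u v B A = 0 := by
  have hcont : Continuous fun B => fayCombination θ u v B A := by
    have := hol.continuous
    unfold fayCombination
    fun_prop
  have hB := dense_setOf_theta_mul_theta_ne_zero (fun z => (hzero z).1)
    (add_left_injective v) (add_left_injective (u + v))
  refine congrFun (hcont.ext_on hB continuous_const fun B hB => ?_) B
  obtain ⟨hBv, hBuv⟩ := mul_ne_zero_iff.mp hB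
  exact fayCombination_eq_zero_of_theta_ne_zero hτ hol hzero h1 hodd hτper hder hu hBv
    (by rwa [add_assoc]) A

end Fay

noncomputable def thetaKernel (θ : ℂ → ℂ) (x z : ℂ) : ℂ :=
  θ (z + x) / (θ z * θ x)

theorem thetaKernel_fay {θ : ℂ → ℂ} (hodd : ∀ z, θ (-z) = -θ z) {u v A B : ℂ}
    (hu : θ u ≠ 0) (hv : θ v ≠ 0) (huv : θ (u + v) ≠ 0) (hA : θ A ≠ 0) (hB : θ B ≠ 0)
    (hBA : θ (B - A) ≠ 0) (hG : fayCombination θ u v B A = 0) :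
    thetaKernel θ (-v) A * thetaKernel θ (u + v) B
      - thetaKernel θ u A * thetaKernel θ (u + v) (B - A)
      + thetaKernel θ u B * thetaKernel θ v (B - A) = 0 := by
  rw [fayCombination] at hG
  simp only [thetaKernel, hodd, ← sub_eq_add_neg, ← add_assoc, sub_add_eq_add_sub]
  field_simp
  linear_combination -hG

theorem twisted_theta_kernel_fay_identity_general
    (M N : ℕ)
    (τ : ℂ) (hτ : 0 < τ.im)
    (θ : ℂ → ℂ) (hol : Differentiable ℂ θ)
    (hzero : ∀ z : ℂ, θ z = 0 ↔ ∃ m n : ℤ, z = (m : ℂ) + (n : ℂ) * τ)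
    (h1 : ∀ z : ℂ, θ (z + 1) = -θ z)
    (hodd : ∀ z : ℂ, θ (-z) = -θ z)
    (hτper : ∀ z : ℂ, θ (z + τ) =
      -Complex.exp (-(↑Real.pi * I * τ)) * Complex.exp (-(2 * ↑Real.pi * I * z)) * θ z)
    (hder : deriv θ 0 = 1)
    -- `kα p q` is `k_α` computed with respect to the lift `α̃ = p/M + (q/N)τ`
    (kα : ℤ → ℤ → ℂ → ℂ → ℂ)
    (hkα : ∀ (p q : ℤ) (x z : ℂ), kα p q x z =
      Complex.exp (-(2 * ↑Real.pi * I * ((q : ℂ) / (N : ℂ)) * x)) *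
          θ (z - ((p : ℂ) / (M : ℂ) + ((q : ℂ) / (N : ℂ)) * τ) + x) /
        (θ (z - ((p : ℂ) / (M : ℂ) + ((q : ℂ) / (N : ℂ)) * τ)) * θ x) - 1 / x)
    -- lifts of `α` and `β`
    (pa qa pb qb : ℤ)
    (u v z z' : ℂ)
    (hθu : θ u ≠ 0) (hθv : θ v ≠ 0) (hθuv : θ (u + v) ≠ 0)
    (hza : θ (z - ((pa : ℂ) / (M : ℂ) + ((qa : ℂ) / (N : ℂ)) * τ)) ≠ 0)
    (hzb : θ (z' - ((pb : ℂ) / (M : ℂ) + ((qb : ℂ) / (N : ℂ)) * τ)) ≠ 0)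
    (hzba : θ (z' - z - (((pb - pa : ℤ) : ℂ) / (M : ℂ) + (((qb - qa : ℤ) : ℂ) / (N : ℂ)) * τ)) ≠ 0) :
    (kα pa qa (-v) z - 1 / v) * (kα pb qb (u + v) z' + 1 / (u + v)) -
      (kα pa qa u z + 1 / u) * (kα (pb - pa) (qb - qa) (u + v) (z' - z) + 1 / (u + v)) +
      (kα pb qb u z' + 1 / u) * (kα (pb - pa) (qb - qa) v (z' - z) + 1 / v) = 0 := by
  set e : ℤ → ℂ → ℂ := fun q x => Complex.exp (-(2 * ↑Real.pi * I * ((q : ℂ) / (N : ℂ)) * x))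
  set A := z - ((pa : ℂ) / (M : ℂ) + ((qa : ℂ) / (N : ℂ)) * τ) with hA
  set B := z' - ((pb : ℂ) / (M : ℂ) + ((qb : ℂ) / (N : ℂ)) * τ) with hB
  have hBA : z' - z - (((pb - pa : ℤ) : ℂ) / (M : ℂ) + (((qb - qa : ℤ) : ℂ) / (N : ℂ)) * τ)
      = B - A := by
    push_cast; ring
  have hk : ∀ p q x w, kα p q x w + 1 / x =
      e q x * thetaKernel θ x (w - ((p : ℂ) / (M : ℂ) + ((q : ℂ) / (N : ℂ)) * τ)) :=
    fun p q x w => by rw [hkα, sub_add_cancel, thetaKernel, mul_div_assoc]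
  have hE₂ : e qa u * e (qb - qa) (u + v) = e qa (-v) * e qb (u + v) := by
    simp only [e, ← Complex.exp_add]; congr 1; push_cast; ring
  have hE₃ : e qb u * e (qb - qa) v = e qa (-v) * e qb (u + v) := by
    simp only [e, ← Complex.exp_add]; congr 1; push_cast; ring
  have hfay := thetaKernel_fay hodd hθu hθv hθuv hza hzb (hBA ▸ hzba)
    (fayCombination_eq_zero hτ.ne' hol hzero h1 hodd hτper hder hθu v B A)
  rw [show kα pa qa (-v) z - 1 / v = kα pa qa (-v) z + 1 / -v by ring]
  simp only [hk, ← hA, ← hB, hBA]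
  linear_combination e qa (-v) * e qb (u + v) * hfay
    - thetaKernel θ u A * thetaKernel θ (u + v) (B - A) * hE₂
    + thetaKernel θ u B * thetaKernel θ v (B - A) * hE₃

/-- the three-term Fay-type identity for the twisted theta kernels
`k_α(x,z) = e^{-2πiax} θ(z-α̃+x)/(θ(z-α̃)θ(x)) - 1/x` (lift `α̃ = p/M + (q/N)τ`):
`(k_α(-v,z) - 1/v)(k_β(u+v,z') + 1/(u+v))
  - (k_α(u,z) + 1/u)(k_{β-α}(u+v,z'-z) + 1/(u+v))
  + (k_β(u,z') + 1/u)(k_{β-α}(v,z'-z) + 1/v) = 0`. -/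
theorem twisted_theta_kernel_fay_identity
    (M N : ℕ) (hM : 0 < M) (hN : 0 < N)
    (τ : ℂ) (hτ : 0 < τ.im)
    (θ : ℂ → ℂ) (hol : Differentiable ℂ θ)
    (hzero : ∀ z : ℂ, θ z = 0 ↔ ∃ m n : ℤ, z = (m : ℂ) + (n : ℂ) * τ)
    (h1 : ∀ z : ℂ, θ (z + 1) = -θ z)
    (hodd : ∀ z : ℂ, θ (-z) = -θ z)
    (hτper : ∀ z : ℂ, θ (z + τ) =
      -Complex.exp (-(↑Real.pi * I * τ)) * Complex.exp (-(2 * ↑Real.pi * I * z)) * θ z)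
    (hder : deriv θ 0 = 1)
    -- `kα p q` is `k_α` computed with respect to the lift `α̃ = p/M + (q/N)τ`
    (kα : ℤ → ℤ → ℂ → ℂ → ℂ)
    (hkα : ∀ (p q : ℤ) (x z : ℂ), kα p q x z =
      Complex.exp (-(2 * ↑Real.pi * I * ((q : ℂ) / (N : ℂ)) * x)) *
          θ (z - ((p : ℂ) / (M : ℂ) + ((q : ℂ) / (N : ℂ)) * τ) + x) /
        (θ (z - ((p : ℂ) / (M : ℂ) + ((q : ℂ) / (N : ℂ)) * τ)) * θ x) - 1 / x)
    -- lifts of `α` and `β`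
    (pa qa pb qb : ℤ)
    (u v z z' : ℂ)
    (hu : u ≠ 0) (hv : v ≠ 0) (huv : u + v ≠ 0)
    (hθu : θ u ≠ 0) (hθv : θ v ≠ 0) (hθuv : θ (u + v) ≠ 0)
    (hza : θ (z - ((pa : ℂ) / (M : ℂ) + ((qa : ℂ) / (N : ℂ)) * τ)) ≠ 0)
    (hzb : θ (z' - ((pb : ℂ) / (M : ℂ) + ((qb : ℂ) / (N : ℂ)) * τ)) ≠ 0)
    (hzba : θ (z' - z - (((pb - pa : ℤ) : ℂ) / (M : ℂ) + (((qb - qa : ℤ) : ℂ) / (N : ℂ)) * τ)) ≠ 0) :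
    (kα pa qa (-v) z - 1 / v) * (kα pb qb (u + v) z' + 1 / (u + v)) -
      (kα pa qa u z + 1 / u) * (kα (pb - pa) (qb - qa) (u + v) (z' - z) + 1 / (u + v)) +
      (kα pb qb u z' + 1 / u) * (kα (pb - pa) (qb - qa) v (z' - z) + 1 / v) = 0 :=
  twisted_theta_kernel_fay_identity_general M N τ hτ θ hol hzero h1 hodd hτper hder kα hkα pa qa pb
    qb u v z z' hθu hθv hθuv hza hzb hzba
end
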